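/- Let n = 2r be even, let 1 ≤ q ≤ n/2, let k be even, and let π ∈ P_2(k) be a non-crossing pair partition (cr(π) = 0). Then for every α : {1,…,k} → I_n with ker α ≥ π one has Ψ_α = I, the 2^r × 2^r identity matrix. -/

import Mathlib

open Matrix

/-- The three Pauli matrices. -/
def pauli1 : Matrix (Fin 2) (Fin 2) ℂ := !![0, 1; 1, 0]
def pauli2 : Matrix (Fin 2) (Fin 2) ℂ := !![0, -Complex.I; Complex.I, 0]
def pauli3 : Matrix (Fin 2) (Fin 2) ℂ := !![1, 0; 0, -1]

/-- The Majorana fermion `ψ_j` (0-based index `j : Fin (2*r)`), realized as an `r`-fold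
Kronecker product of Pauli matrices, acting on `(Fin r → Fin 2)`-indexed space of size `2^r`.
For `j < r` it is `σ₃^{⊗ j} ⊗ σ₁ ⊗ 1^{⊗ (r-j-1)}`, for `j = r + j'` it is
`σ₃^{⊗ j'} ⊗ σ₂ ⊗ 1^{⊗ (r-j'-1)}`. -/
def majorana (r : ℕ) (j : Fin (2 * r)) :
    Matrix (Fin r → Fin 2) (Fin r → Fin 2) ℂ := fun x y =>
  ∏ i : Fin r,
    (if (i : ℕ) < (j : ℕ) % r then pauli3
     else if (i : ℕ) = (j : ℕ) % r then (if (j : ℕ) < r then pauli1 else pauli2)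
     else (1 : Matrix (Fin 2) (Fin 2) ℂ)) (x i) (y i)

/-- The index set `I_n`: subsets of `{0,…,n-1}` of size `q`, i.e. strictly increasing
`q`-tuples with entries in `{1,…,n}`. -/
abbrev MajIdx (n q : ℕ) := {s : Finset (Fin n) // s.card = q}

/-- `Ψ_R = i^{⌊q/2⌋} ψ_{i_1} ⋯ ψ_{i_q}` where `R = {i_1 < ⋯ < i_q}`. -/
noncomputable def PsiOp (r q : ℕ) (R : MajIdx (2 * r) q) :
    Matrix (Fin r → Fin 2) (Fin r → Fin 2) ℂ :=
  Complex.I ^ (q / 2) • ((R.1.sort (· ≤ ·)).map (majorana r)).prod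

/-- The normalized trace `tr = 2^{-r} Tr`. -/
noncomputable def ntr {r : ℕ} (A : Matrix (Fin r → Fin 2) (Fin r → Fin 2) ℂ) : ℂ :=
  ((2 : ℂ) ^ r)⁻¹ * A.trace

/-- `Ψ_α = Ψ_{α(1)} ⋯ Ψ_{α(k)}`. -/
noncomputable def PsiProd (r q : ℕ) {k : ℕ} (α : Fin k → MajIdx (2 * r) q) :
    Matrix (Fin r → Fin 2) (Fin r → Fin 2) ℂ :=
  ((List.finRange k).map (fun x => PsiOp r q (α x))).prod

/-- A pair partition of `{1,…,k}`, encoded as a fixed-point-free involution: the blocks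
are the pairs `{x, f x}`. -/
def IsPairing {k : ℕ} (f : Fin k → Fin k) : Prop :=
  Function.Involutive f ∧ ∀ x, f x ≠ x

instance {k : ℕ} : DecidablePred (IsPairing (k := k)) := fun f =>
  decidable_of_iff ((∀ x, f (f x) = x) ∧ ∀ x, f x ≠ x) Iff.rfl

/-- The set of crossings of a pair partition encoded by the involution `f`: each crossing
pair of blocks `{v₁ < v₂}, {w₁ < w₂}` with `v₁ < w₁ < v₂ < w₂` is recorded once, as
`(v₁, w₁)`. -/
def crossPairs {k : ℕ} (f : Fin k → Fin k) : Finset (Fin k × Fin k) :=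
  Finset.univ.filter fun p => p.1 < p.2 ∧ p.2 < f p.1 ∧ f p.1 < f p.2

/-- The number of crossings `cr(π)` of a pair partition. -/
def crN {k : ℕ} (f : Fin k → Fin k) : ℕ := (crossPairs f).card

/-- The partition (as a setoid, i.e. an equivalence relation) generated by the
pairs `{x, f x}`; for a fixed-point-free involution `f` this is the associated
pair partition. -/
def genSetoid {k : ℕ} (f : Fin k → Fin k) : Setoid (Fin k) :=
  sInf {s : Setoid (Fin k) | ∀ x, s (f x) x}

/-!
Each `Ψ_R` is an involution: distinct Majorana matrices anticommute and square to `1`, so a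
product of `q` of them squares to `(-1)^(q choose 2)`, and the phase `i^⌊q/2⌋` squares to the same
sign. For a non-crossing pairing, the partner `m` of the first point encloses a union of blocks
`(1, m)`, and the rest `(m, k]` is a union of blocks too; by induction both products are `1`,
leaving `Ψ_{α(1)} Ψ_{α(m)} = Ψ_{α(1)}² = 1`.
-/

def Anticommute {R : Type*} [Mul R] [Neg R] (a b : R) : Prop := a * b = -(b * a)

theorem Anticommute.symm {R : Type*} [Mul R] [InvolutiveNeg R] {a b : R}
    (h : Anticommute a b) : Anticommute b a :=
  neg_eq_iff_eq_neg.mp (Eq.symm h)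

theorem pauli1_mul_self : pauli1 * pauli1 = 1 := by
  ext i j; fin_cases i <;> fin_cases j <;> simp [pauli1, Matrix.mul_apply]

theorem pauli2_mul_self : pauli2 * pauli2 = 1 := by
  ext i j; fin_cases i <;> fin_cases j <;> simp [pauli2, Matrix.mul_apply]

theorem pauli3_mul_self : pauli3 * pauli3 = 1 := by
  ext i j; fin_cases i <;> fin_cases j <;> simp [pauli3, Matrix.mul_apply]

theorem anticommute_pauli1_pauli2 : Anticommute pauli1 pauli2 := by
  ext i j; fin_cases i <;> fin_cases j <;> simp [pauli1, pauli2, Matrix.mul_apply]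

theorem anticommute_pauli1_pauli3 : Anticommute pauli1 pauli3 := by
  ext i j; fin_cases i <;> fin_cases j <;> simp [pauli1, pauli3, Matrix.mul_apply]

theorem anticommute_pauli2_pauli3 : Anticommute pauli2 pauli3 := by
  ext i j; fin_cases i <;> fin_cases j <;> simp [pauli2, pauli3, Matrix.mul_apply]

namespace Matrix

variable {ι m R : Type*} [Fintype ι] [DecidableEq ι] [Fintype m]

def kroneckerPi [CommSemiring R] (A : ι → Matrix m m R) : Matrix (ι → m) (ι → m) R :=
  fun x y => ∏ i, A i (x i) (y i)

theorem kroneckerPi_mul [CommSemiring R] (A B : ι → Matrix m m R) :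
    kroneckerPi A * kroneckerPi B = kroneckerPi (A * B) := by
  ext x y
  simp only [kroneckerPi, mul_apply, Pi.mul_apply, ← Finset.prod_mul_distrib,
    Finset.prod_univ_sum, Fintype.piFinset_univ]

omit [DecidableEq ι] [Fintype m] in
theorem kroneckerPi_one [DecidableEq m] [CommSemiring R] :
    kroneckerPi (1 : ι → Matrix m m R) = 1 := by
  ext x y
  by_cases h : x = y
  · subst h; simp [kroneckerPi]
  · obtain ⟨i, hi⟩ := Function.ne_iff.mp h
    rw [one_apply_ne h]
    exact Finset.prod_eq_zero (Finset.mem_univ i) (by simp [hi])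

theorem anticommute_kroneckerPi [CommRing R] {A B : ι → Matrix m m R} (i₀ : ι)
    (h₀ : Anticommute (A i₀) (B i₀)) (h : ∀ i ≠ i₀, Commute (A i) (B i)) :
    Anticommute (kroneckerPi A) (kroneckerPi B) := by
  rw [Anticommute, kroneckerPi_mul, kroneckerPi_mul]
  ext x y
  have hrest : ∀ i ∈ Finset.univ.erase i₀, (A i * B i) (x i) (y i) = (B i * A i) (x i) (y i) :=
    fun i hi => by rw [(h i (Finset.ne_of_mem_erase hi)).eq]
  simp only [kroneckerPi, neg_apply, Pi.mul_apply,
    ← Finset.mul_prod_erase Finset.univ _ (Finset.mem_univ i₀), Finset.prod_congr rfl hrest]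
  rw [h₀, neg_apply, neg_mul]

end Matrix

def majoranaFactor (r : ℕ) (j : Fin (2 * r)) (i : Fin r) : Matrix (Fin 2) (Fin 2) ℂ :=
  if (i : ℕ) < (j : ℕ) % r then pauli3
  else if (i : ℕ) = (j : ℕ) % r then (if (j : ℕ) < r then pauli1 else pauli2)
  else 1

theorem majorana_eq_kroneckerPi (r : ℕ) (j : Fin (2 * r)) :
    majorana r j = Matrix.kroneckerPi (majoranaFactor r j) :=
  rfl

theorem majorana_mul_self (r : ℕ) (j : Fin (2 * r)) : majorana r j * majorana r j = 1 := by
  have hfactor : majoranaFactor r j * majoranaFactor r j = 1 := by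
    funext i
    simp only [Pi.mul_apply, Pi.one_apply, majoranaFactor]
    split_ifs <;> simp [pauli1_mul_self, pauli2_mul_self, pauli3_mul_self]
  rw [majorana_eq_kroneckerPi, Matrix.kroneckerPi_mul, hfactor, Matrix.kroneckerPi_one]

theorem Nat.mod_eq_ite_of_lt_two_mul {j r : ℕ} (h : j < 2 * r) :
    j % r = if j < r then j else j - r := by
  split_ifs with hj
  · exact Nat.mod_eq_of_lt hj
  · rw [Nat.mod_eq_sub_mod (not_lt.mp hj), Nat.mod_eq_of_lt (by omega)]

/-- The factors of `ψ_j` and `ψ_l` anticommute at position `j mod r` and commute elsewhere. -/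
theorem anticommute_majorana_of_mod_le {r : ℕ} {j l : Fin (2 * r)} (hjl : j ≠ l)
    (hle : (j : ℕ) % r ≤ (l : ℕ) % r) : Anticommute (majorana r j) (majorana r l) := by
  have hr : 0 < r := by omega
  rw [majorana_eq_kroneckerPi, majorana_eq_kroneckerPi]
  refine Matrix.anticommute_kroneckerPi ⟨(j : ℕ) % r, Nat.mod_lt _ hr⟩ ?_ ?_
  · simp only [majoranaFactor, lt_irrefl, if_false, if_true]
    rcases hle.lt_or_eq with hlt | heq
    · rw [if_pos hlt]
      split_ifs
      exacts [anticommute_pauli1_pauli3, anticommute_pauli2_pauli3]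
    · -- `j ≠ l` with `j ≡ l mod r` puts exactly one of them below `r`: the factors are `σ₁, σ₂`
      rw [if_neg heq.not_lt, if_pos heq]
      have hj := Nat.mod_eq_ite_of_lt_two_mul j.isLt
      have hl := Nat.mod_eq_ite_of_lt_two_mul l.isLt
      have hval : (j : ℕ) ≠ l := Fin.val_ne_of_ne hjl
      split_ifs at hj hl ⊢ <;> first
        | omega
        | exact anticommute_pauli1_pauli2
        | exact anticommute_pauli1_pauli2.symm
  · intro i hi
    have hne : (i : ℕ) ≠ (j : ℕ) % r := fun h => hi (Fin.ext h)
    rcases hne.lt_or_gt with hlt | hgt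
    · rw [majoranaFactor, if_pos hlt, majoranaFactor, if_pos (hlt.trans_le hle)]
    · rw [majoranaFactor, if_neg hgt.not_gt, if_neg hgt.ne']
      exact Commute.one_left _

theorem anticommute_majorana {r : ℕ} {j l : Fin (2 * r)} (hjl : j ≠ l) :
    Anticommute (majorana r j) (majorana r l) := by
  rcases le_total ((j : ℕ) % r) ((l : ℕ) % r) with hle | hle
  · exact anticommute_majorana_of_mod_le hjl hle
  · exact (anticommute_majorana_of_mod_le hjl.symm hle).symm

namespace List

variable {R : Type*} [Ring R]

theorem prod_mul_of_forall_anticommute {a : R} {l : List R} (h : ∀ b ∈ l, Anticommute b a) :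
    l.prod * a = (-1) ^ l.length * (a * l.prod) := by
  induction l with
  | nil => simp
  | cons b t ih =>
    have hb : b * a = -(a * b) := h b mem_cons_self
    have hcomm : Commute b ((-1 : R) ^ t.length) := ((Commute.neg_one_right b).pow_right _)
    rw [prod_cons, mul_assoc, ih fun c hc => h c (mem_cons_of_mem _ hc), ← mul_assoc b,
      hcomm.eq, mul_assoc, ← mul_assoc b, hb, length_cons, pow_succ]
    simp only [neg_mul, mul_neg, mul_one, mul_assoc]

theorem prod_mul_self_of_pairwise_anticommute {l : List R} (hsq : ∀ b ∈ l, b * b = 1)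
    (hl : l.Pairwise Anticommute) : l.prod * l.prod = (-1) ^ l.length.choose 2 := by
  induction l with
  | nil => simp
  | cons a t ih =>
    rw [pairwise_cons] at hl
    have hmove := prod_mul_of_forall_anticommute fun b hb => (hl.1 b hb).symm
    have hcomm : Commute a ((-1 : R) ^ t.length) := ((Commute.neg_one_right a).pow_right _)
    calc (a * t.prod) * (a * t.prod) = a * (t.prod * a) * t.prod := by simp only [mul_assoc]
      _ = (-1) ^ t.length * (a * a) * (t.prod * t.prod) := by
        rw [hmove, ← mul_assoc, hcomm.eq]; simp only [mul_assoc]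
      _ = (-1) ^ (a :: t).length.choose 2 := by
        rw [hsq a mem_cons_self, ih (fun b hb => hsq b (mem_cons_of_mem _ hb)) hl.2, mul_one,
          ← pow_add, length_cons, Nat.choose_succ_succ', Nat.choose_one_right]

end List

theorem Nat.even_div_two_add_choose_two (q : ℕ) : Even (q / 2 + q.choose 2) := by
  induction q using Nat.twoStepInduction with
  | zero => decide
  | one => decide
  | more n ih _ =>
    obtain ⟨m, hm⟩ := ih
    have hchoose : (n + 2).choose 2 = n.choose 2 + 2 * n + 1 := by
      simp only [Nat.choose_succ_succ', Nat.choose_one_right, Nat.choose_zero_right, zero_add,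
        Nat.reduceAdd]
      omega
    exact ⟨m + n + 1, by omega⟩

theorem PsiOp_mul_self (r q : ℕ) (R : MajIdx (2 * r) q) : PsiOp r q R * PsiOp r q R = 1 := by
  set L := (R.1.sort (· ≤ ·)).map (majorana r)
  have hlen : L.length = q := by simp [L, R.2]
  have hsq : ∀ b ∈ L, b * b = 1 := by
    simp only [L, List.mem_map]
    rintro _ ⟨j, -, rfl⟩
    exact majorana_mul_self r j
  have hpw : L.Pairwise Anticommute :=
    List.Pairwise.map _ (fun _ _ => anticommute_majorana) (R.1.sort_nodup (· ≤ ·))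
  have hphase : Complex.I ^ (q / 2) * Complex.I ^ (q / 2) = (-1) ^ (q / 2) := by
    rw [← pow_add, ← two_mul, pow_mul, Complex.I_sq]
  rw [PsiOp, smul_mul_smul_comm, List.prod_mul_self_of_pairwise_anticommute hsq hpw, hlen, hphase,
    ← neg_one_smul ℂ (1 : Matrix (Fin r → Fin 2) (Fin r → Fin 2) ℂ), smul_pow, one_pow, smul_smul,
    ← pow_add, (Nat.even_div_two_add_choose_two q).neg_one_pow, one_smul]

def IsNoncrossing {α : Type*} [LT α] (f : α → α) : Prop :=
  ∀ i j, i < j → j < f i → ¬ f i < f j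

section Noncrossing

variable {M : Type*} [Monoid M] {f : ℕ → ℕ} {g : ℕ → M}

theorem prod_map_range'_eq_one_of_noncrossing (hinv : Function.Involutive f)
    (hnc : IsNoncrossing f) (hsq : ∀ i, g i * g i = 1) (hg : ∀ i, g (f i) = g i) (n a : ℕ)
    (hpair : ∀ i, a ≤ i → i < a + n → a ≤ f i ∧ f i < a + n ∧ f i ≠ i) :
    ((List.range' a n).map g).prod = 1 := by
  induction n using Nat.strong_induction_on generalizing a with
  | _ n ih =>
  rcases Nat.eq_zero_or_pos n with rfl | hn
  · simp
  set m := f a with hm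
  obtain ⟨ham, hmn, hma⟩ := hpair a le_rfl (by omega)
  have hfm : f m = a := hinv a
  have hinner : ∀ i, a + 1 ≤ i → i < a + 1 + (m - a - 1) →
      a + 1 ≤ f i ∧ f i < a + 1 + (m - a - 1) ∧ f i ≠ i := by
    intro i hai him
    obtain ⟨h₁, h₂, h₃⟩ := hpair i (by omega) (by omega)
    have hfa : f i ≠ a := fun h => by rw [← h, hinv i] at hm; omega
    have hfm' : f i ≠ m := fun h => by rw [← h, hinv i] at hfm; omega
    have hlt := hnc a i (by omega) (by omega)
    omega
  have houter : ∀ i, m + 1 ≤ i → i < m + 1 + (a + n - m - 1) →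
      m + 1 ≤ f i ∧ f i < m + 1 + (a + n - m - 1) ∧ f i ≠ i := by
    intro i hmi hin
    obtain ⟨h₁, h₂, h₃⟩ := hpair i (by omega) (by omega)
    have hfa : f i ≠ a := fun h => by rw [← h, hinv i] at hm; omega
    have hfm' : f i ≠ m := fun h => by rw [← h, hinv i] at hfm; omega
    have hnot_inner : ¬ (a < f i ∧ f i < m) := fun h => hnc a (f i) h.1 h.2 (by rw [hinv]; omega)
    omega
  have hsplit : List.range' a n =
      a :: (List.range' (a + 1) (m - a - 1) ++ m :: List.range' (m + 1) (a + n - m - 1)) := by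
    have hm' : m = a + 1 + 1 * (m - a - 1) := by omega
    conv_lhs => rw [show n = m - a - 1 + (a + n - m - 1 + 1) + 1 by omega]
    rw [List.range'_succ, ← List.range'_append, List.range'_succ, ← hm']
  rw [hsplit, List.map_cons, List.map_append, List.map_cons, List.prod_cons, List.prod_append,
    List.prod_cons, ih _ (by omega) _ hinner, ih _ (by omega) _ houter, one_mul, mul_one, hm, hg,
    hsq]

end Noncrossing

section NatExtension

variable {k : ℕ} {f : Fin k → Fin k}

def natExtension (f : Fin k → Fin k) (i : ℕ) : ℕ := if h : i < k then f ⟨i, h⟩ else i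

theorem natExtension_coe (x : Fin k) : natExtension f x = f x := dif_pos x.isLt

theorem natExtension_of_le {i : ℕ} (hi : k ≤ i) : natExtension f i = i := dif_neg (not_lt.mpr hi)

theorem natExtension_involutive (hf : Function.Involutive f) :
    Function.Involutive (natExtension f) := by
  intro i
  rcases lt_or_ge i k with hi | hi
  · lift i to Fin k using hi
    rw [natExtension_coe, natExtension_coe, hf]
  · rw [natExtension_of_le hi, natExtension_of_le hi]

theorem natExtension_noncrossing (hnc : IsNoncrossing f) :
    IsNoncrossing (natExtension f) := by
  intro i j hij hji
  rcases lt_or_ge i k with hi | hi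
  · lift i to Fin k using hi
    rw [natExtension_coe] at hji ⊢
    lift j to Fin k using hji.trans (f i).isLt
    rw [natExtension_coe]
    exact hnc i j hij hji
  · rw [natExtension_of_le hi] at hji
    omega

end NatExtension

theorem prod_map_finRange_eq_one_of_noncrossing {M : Type*} [Monoid M] {k : ℕ}
    {f : Fin k → Fin k} (hf : IsPairing f) (hnc : IsNoncrossing f)
    {g : Fin k → M} (hsq : ∀ i, g i * g i = 1) (hg : ∀ i, g (f i) = g i) :
    ((List.finRange k).map g).prod = 1 := by
  set G : ℕ → M := fun i => if h : i < k then g ⟨i, h⟩ else 1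
  have hG : ∀ x : Fin k, G x = g x := fun x => dif_pos x.isLt
  have hG_of_le : ∀ i, k ≤ i → G i = 1 := fun i hi => dif_neg (not_lt.mpr hi)
  have hGsq : ∀ i, G i * G i = 1 := by
    intro i
    rcases lt_or_ge i k with hi | hi
    · lift i to Fin k using hi
      rw [hG, hsq]
    · rw [hG_of_le i hi, one_mul]
  have hGF : ∀ i, G (natExtension f i) = G i := by
    intro i
    rcases lt_or_ge i k with hi | hi
    · lift i to Fin k using hi
      rw [natExtension_coe, hG, hG, hg]
    · rw [natExtension_of_le hi]
  have hpair : ∀ i, 0 ≤ i → i < 0 + k →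
      0 ≤ natExtension f i ∧ natExtension f i < 0 + k ∧ natExtension f i ≠ i := by
    intro i _ hi
    lift i to Fin k using (by omega)
    rw [natExtension_coe]
    exact ⟨Nat.zero_le _, by omega, Fin.val_ne_of_ne (hf.2 i)⟩
  have hlist : (List.finRange k).map g = (List.range' 0 k).map G := by
    rw [← List.range_eq_range', ← List.map_coe_finRange_eq_range, List.map_map]
    exact List.map_congr_left fun x _ => (hG x).symm
  rw [hlist]
  exact prod_map_range'_eq_one_of_noncrossing (natExtension_involutive hf.1)
    (natExtension_noncrossing hnc) hGsq hGF k 0 hpair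

theorem isNoncrossing_of_crN_eq_zero {k : ℕ} {f : Fin k → Fin k} (hcr : crN f = 0) :
    IsNoncrossing f := fun i j hij hjf hf =>
  Finset.notMem_empty (i, j) <|
    Finset.card_eq_zero.mp hcr ▸ Finset.mem_filter.mpr ⟨Finset.mem_univ _, hij, hjf, hf⟩

theorem PsiProd_noncrossing_general (r q : ℕ) {k : ℕ}
    (f : Fin k → Fin k) (hf : IsPairing f) (hcr : crN f = 0)
    (α : Fin k → MajIdx (2 * r) q) (hα : ∀ x, α (f x) = α x) :
    PsiProd r q α = 1 :=
  prod_map_finRange_eq_one_of_noncrossing hf (isNoncrossing_of_crN_eq_zero hcr)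
    (fun x => PsiOp_mul_self r q (α x)) (fun x => by rw [hα])

/-- if `π ∈ P₂(k)` (encoded by the fixed-point-free involution `f`) is
non-crossing and `ker α ≥ π`, then `Ψ_α = I`. -/
theorem PsiProd_noncrossing (r q : ℕ) (hq1 : 1 ≤ q) (hq2 : q ≤ r) {k : ℕ} (hk : Even k)
    (f : Fin k → Fin k) (hf : IsPairing f) (hcr : crN f = 0)
    (α : Fin k → MajIdx (2 * r) q) (hα : ∀ x, α (f x) = α x) :
    PsiProd r q α = 1 :=
  PsiProd_noncrossing_general r q f hf hcr α hα
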